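/- Let p, q : ℝ → ℝ^N be differentiable, D a real symmetric N×N matrix, V ∈ ℝ^N, β ∈ ℝ, and suppose p' = -D·q - V∘q - β(p∘p+q∘q)∘q and q' = D·p + V∘p + β(p∘p+q∘q)∘p (∘ = componentwise product). Then the energy H(t) = (1/2)pᵀDp + (1/2)qᵀDq + (1/2)Σⱼ Vⱼ(pⱼ²+qⱼ²) + (β/4)Σⱼ(pⱼ²+qⱼ²)² is constant in time. -/

import Mathlib

open Matrix

private lemma symm_swap {N : ℕ} (D : Matrix (Fin N) (Fin N) ℝ) (hD : D.IsSymm)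
    (a b : Fin N → ℝ) :
    ∑ i, a i * ∑ j, D i j * b j = ∑ i, b i * ∑ j, D i j * a j := by
  simp_rw [Finset.mul_sum]
  rw [Finset.sum_comm]
  refine Finset.sum_congr rfl fun i _ => Finset.sum_congr rfl fun j _ => ?_
  rw [show D j i = D i j from (hD.apply i j).symm ▸ rfl]
  ring

theorem stmt_8 {N : ℕ} (D : Matrix (Fin N) (Fin N) ℝ) (hD : D.IsSymm)
    (V : Fin N → ℝ) (β : ℝ) (p q p' q' : ℝ → (Fin N → ℝ))
    (hp : ∀ t, HasDerivAt p (p' t) t)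
    (hq : ∀ t, HasDerivAt q (q' t) t)
    (heqp : ∀ t, p' t = -(D *ᵥ q t) - V * q t - β • ((p t * p t + q t * q t) * q t))
    (heqq : ∀ t, q' t = D *ᵥ p t + V * p t + β • ((p t * p t + q t * q t) * p t)) :
    ∀ t s : ℝ,
      (1/2) * (p t ⬝ᵥ (D *ᵥ p t)) + (1/2) * (q t ⬝ᵥ (D *ᵥ q t))
        + (1/2) * (V ⬝ᵥ (p t * p t + q t * q t))
        + (β/4) * ∑ j, ((p t j)^2 + (q t j)^2)^2
      = (1/2) * (p s ⬝ᵥ (D *ᵥ p s)) + (1/2) * (q s ⬝ᵥ (D *ᵥ q s))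
        + (1/2) * (V ⬝ᵥ (p s * p s + q s * q s))
        + (β/4) * ∑ j, ((p s j)^2 + (q s j)^2)^2 := by
  intro t s
  have hpC : ∀ τ (i : Fin N), HasDerivAt (fun τ => p τ i) (p' τ i) τ := by
    intro τ i
    exact hasDerivAt_pi.mp (hp τ) i
  have hqC : ∀ τ (i : Fin N), HasDerivAt (fun τ => q τ i) (q' τ i) τ := by
    intro τ i
    exact hasDerivAt_pi.mp (hq τ) i
  set H : ℝ → ℝ := fun τ =>
    (1/2) * ∑ i, p τ i * ∑ j, D i j * p τ j
    + (1/2) * ∑ i, q τ i * ∑ j, D i j * q τ j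
    + (1/2) * ∑ j, V j * (p τ j * p τ j + q τ j * q τ j)
    + (β/4) * ∑ j, ((p τ j)^2 + (q τ j)^2)^2 with hHdef
  have hderiv : ∀ τ, HasDerivAt H 0 τ := by
    intro τ
    have h1 : HasDerivAt (fun τ => ∑ i, p τ i * ∑ j, D i j * p τ j)
        (∑ i, (p' τ i * ∑ j, D i j * p τ j + p τ i * ∑ j, D i j * p' τ j)) τ := by
      refine HasDerivAt.fun_sum fun i _ => ?_
      exact (hpC τ i).mul (HasDerivAt.fun_sum fun j _ => (hpC τ j).const_mul _)
    have h2 : HasDerivAt (fun τ => ∑ i, q τ i * ∑ j, D i j * q τ j)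
        (∑ i, (q' τ i * ∑ j, D i j * q τ j + q τ i * ∑ j, D i j * q' τ j)) τ := by
      refine HasDerivAt.fun_sum fun i _ => ?_
      exact (hqC τ i).mul (HasDerivAt.fun_sum fun j _ => (hqC τ j).const_mul _)
    have h3 : HasDerivAt (fun τ => ∑ j, V j * (p τ j * p τ j + q τ j * q τ j))
        (∑ j, V j * (p' τ j * p τ j + p τ j * p' τ j + (q' τ j * q τ j + q τ j * q' τ j))) τ := by
      refine HasDerivAt.fun_sum fun j _ => ?_
      exact (((hpC τ j).mul (hpC τ j)).add ((hqC τ j).mul (hqC τ j))).const_mul _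
    have h4 : HasDerivAt (fun τ => ∑ j, ((p τ j)^2 + (q τ j)^2)^2)
        (∑ j, 2 * ((p τ j)^2 + (q τ j)^2)^1 *
          (2 * p τ j ^ 1 * p' τ j + 2 * q τ j ^ 1 * q' τ j)) τ := by
      refine HasDerivAt.fun_sum fun j _ => ?_
      exact (((hpC τ j).pow 2).add ((hqC τ j).pow 2)).pow 2
    have hAll := (((h1.const_mul (1/2:ℝ)).add (h2.const_mul (1/2:ℝ))).add
        (h3.const_mul (1/2:ℝ))).add (h4.const_mul (β/4))
    have hzero :
        (1/2) * ∑ i, (p' τ i * ∑ j, D i j * p τ j + p τ i * ∑ j, D i j * p' τ j)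
        + (1/2) * ∑ i, (q' τ i * ∑ j, D i j * q τ j + q τ i * ∑ j, D i j * q' τ j)
        + (1/2) * ∑ j, V j * (p' τ j * p τ j + p τ j * p' τ j + (q' τ j * q τ j + q τ j * q' τ j))
        + (β/4) * ∑ j, 2 * ((p τ j)^2 + (q τ j)^2)^1 *
            (2 * p τ j ^ 1 * p' τ j + 2 * q τ j ^ 1 * q' τ j) = 0 := by
      have hswapP : ∑ i, p τ i * ∑ j, D i j * p' τ j
          = ∑ i, p' τ i * ∑ j, D i j * p τ j := symm_swap D hD _ _
      have hswapQ : ∑ i, q τ i * ∑ j, D i j * q' τ j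
          = ∑ i, q' τ i * ∑ j, D i j * q τ j := symm_swap D hD _ _
      simp_rw [Finset.sum_add_distrib]
      rw [hswapP, hswapQ]
      have hcomb :
          ∀ (a b c d : ℝ), (1/2)*(a+a) + (1/2)*(b+b) + (1/2)*c + (β/4)*d
            = a + b + (1/2)*c + (β/4)*d := by intro a b c d; ring
      rw [hcomb]
      rw [Finset.mul_sum, Finset.mul_sum]
      rw [← Finset.sum_add_distrib, ← Finset.sum_add_distrib, ← Finset.sum_add_distrib]
      refine Finset.sum_eq_zero fun i _ => ?_
      have hpi : p' τ i = -(∑ j, D i j * q τ j) - V i * q τ i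
          - β * ((p τ i * p τ i + q τ i * q τ i) * q τ i) := by
        have := congrFun (heqp τ) i
        simpa [Matrix.mulVec, dotProduct] using this
      have hqi : q' τ i = (∑ j, D i j * p τ j) + V i * p τ i
          + β * ((p τ i * p τ i + q τ i * q τ i) * p τ i) := by
        have := congrFun (heqq τ) i
        simpa [Matrix.mulVec, dotProduct] using this
      rw [hpi, hqi]
      ring
    rw [← hzero]
    exact hAll
  have hdiff : Differentiable ℝ H := fun τ => (hderiv τ).differentiableAt
  have hd0 : ∀ τ, deriv H τ = 0 := fun τ => (hderiv τ).deriv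
  have hconst : H t = H s := is_const_of_deriv_eq_zero hdiff hd0 t s
  simpa [hHdef, dotProduct, Matrix.mulVec] using hconst
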